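/- arXiv:2211.00225 — 2 statements merged into one kernel-verified Lean document; each statement's English description precedes it below -/
import Mathlib

section
/- Let V be a real Hilbert space with inner product a(·,·), and let V₁,…,V_N be closed subspaces with orthogonal projections P₁,…,P_N. Suppose every v ∈ V admits a decomposition v = Σᵢ vᵢ with vᵢ ∈ Vᵢ and Σᵢ a(vᵢ,vᵢ) ≤ C₀ a(v,v). Then for every v ∈ V, a(v,v) ≤ (2 + C₀) Σᵢ a(v, Pᵢ v). -/
open RealInnerProductSpace

/-- Coercivity estimate for the additive Schwarz operator: under the stable
decomposition assumption, `a(v,v) ≤ (2 + C₀) Σᵢ a(v, Pᵢ v)`. -/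
theorem asm_coercivity {V : Type*} [NormedAddCommGroup V] [InnerProductSpace ℝ V]
    {N : ℕ} (Vs : Fin N → Submodule ℝ V) (hclosed : ∀ i, IsClosed (Vs i : Set V))
    (P : Fin N → V →ₗ[ℝ] V)
    (hPmem : ∀ i (v : V), P i v ∈ Vs i)
    (hPproj : ∀ i (v : V), ∀ w ∈ Vs i, ⟪P i v, w⟫ = ⟪v, w⟫)
    (C₀ : ℝ) (hC₀ : 0 < C₀)
    (hdecomp : ∀ v : V, ∃ vi : Fin N → V, (∀ i, vi i ∈ Vs i) ∧ v = ∑ i, vi i ∧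
      ∑ i, ⟪vi i, vi i⟫ ≤ C₀ * ⟪v, v⟫) :
    ∀ v : V, ⟪v, v⟫ ≤ (2 + C₀) * ∑ i, ⟪v, P i v⟫ := by
  intro v
  obtain ⟨vi, hmem, hsum, hbound⟩ := hdecomp v
  have hS : ∑ i, ⟪v, P i v⟫ = ∑ i, ‖P i v‖ ^ 2 := by
    refine Finset.sum_congr rfl fun i _ => ?_
    rw [← hPproj i v (P i v) (hPmem i v), real_inner_self_eq_norm_sq]
  have h1 : ⟪v, v⟫ ≤ ∑ i, ‖P i v‖ * ‖vi i‖ := by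
    calc ⟪v, v⟫ = ⟪v, ∑ i, vi i⟫ := by rw [← hsum]
      _ = ∑ i, ⟪v, vi i⟫ := inner_sum _ _ _
      _ = ∑ i, ⟪P i v, vi i⟫ := by
          refine Finset.sum_congr rfl fun i _ => (hPproj i v (vi i) (hmem i)).symm
      _ ≤ ∑ i, ‖P i v‖ * ‖vi i‖ :=
          Finset.sum_le_sum fun i _ => real_inner_le_norm _ _
  have h2 : (∑ i, ‖P i v‖ * ‖vi i‖) ^ 2 ≤ (∑ i, ‖P i v‖ ^ 2) * ∑ i, ‖vi i‖ ^ 2 :=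
    Finset.sum_mul_sq_le_sq_mul_sq Finset.univ _ _
  have h3 : ∑ i, ‖vi i‖ ^ 2 ≤ C₀ * ⟪v, v⟫ := by
    calc ∑ i, ‖vi i‖ ^ 2 = ∑ i, ⟪vi i, vi i⟫ := by
          refine Finset.sum_congr rfl fun i _ => (real_inner_self_eq_norm_sq _).symm
      _ ≤ C₀ * ⟪v, v⟫ := hbound
  have h4 : (0:ℝ) ≤ ∑ i, ‖P i v‖ ^ 2 :=
    Finset.sum_nonneg fun i _ => sq_nonneg _
  have h5 : (0:ℝ) ≤ ⟪v, v⟫ := real_inner_self_nonneg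
  have hT : (∑ i, ‖P i v‖ * ‖vi i‖) ^ 2 ≤ (∑ i, ‖P i v‖ ^ 2) * (C₀ * ⟪v, v⟫) :=
    le_trans h2 (mul_le_mul_of_nonneg_left h3 h4)
  have hA2 : ⟪v, v⟫ ^ 2 ≤ (∑ i, ‖P i v‖ * ‖vi i‖) ^ 2 := by nlinarith
  have hkey : ⟪v, v⟫ ^ 2 ≤ (∑ i, ‖P i v‖ ^ 2) * (C₀ * ⟪v, v⟫) := le_trans hA2 hT
  rw [hS]
  rcases eq_or_lt_of_le h5 with h0 | h0
  · rw [← h0]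
    positivity
  · have : ⟪v, v⟫ ≤ C₀ * ∑ i, ‖P i v‖ ^ 2 := by
      rw [pow_two] at hkey
      nlinarith
    nlinarith
end

section
/- Let V be a real Hilbert space with inner product a, and let P₁,…,P_N be orthogonal projections onto closed subspaces V₁,…,V_N. Suppose there are constants ℰᵢⱼ ∈ [0,1] with a(vᵢ,vⱼ) ≤ ℰᵢⱼ a(vᵢ,vᵢ)^{1/2} a(vⱼ,vⱼ)^{1/2} for all vᵢ ∈ Vᵢ, vⱼ ∈ Vⱼ. Then with P = Σᵢ Pᵢ, for every v ∈ V, a(Pv, Pv) ≤ ‖ℰ‖₂² a(v,v), where ‖ℰ‖₂ is the spectral norm of the N×N matrix with entries ℰᵢⱼ. -/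
/-!
Write `w = Σᵢ Pᵢ v`. The strengthened Cauchy–Schwarz inequality bounds `‖w‖²` by the quadratic form
of `ℰ` at the vector `(‖Pᵢ v‖)ᵢ`, hence by `‖ℰ‖₂ Σᵢ ‖Pᵢ v‖²`. Since each `Pᵢ` is an orthogonal
projection, `‖Pᵢ v‖² = ⟪v, Pᵢ v⟫`, so this sum equals `⟪v, w⟫ ≤ ‖v‖ ‖w‖`. Dividing by `‖w‖`
gives `‖w‖ ≤ ‖ℰ‖₂ ‖v‖`.
-/

open RealInnerProductSpace

/-- Spectral norm (operator 2-norm) of a real matrix. -/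
noncomputable def spectralNorm2 {N : ℕ} (E : Matrix (Fin N) (Fin N) ℝ) : ℝ :=
  ‖(Matrix.toEuclideanCLM (𝕜 := ℝ) E : EuclideanSpace ℝ (Fin N) →L[ℝ] EuclideanSpace ℝ (Fin N))‖

lemma ContinuousLinearMap.real_inner_self_apply_le_opNorm_mul_sq {F : Type*}
    [NormedAddCommGroup F] [InnerProductSpace ℝ F] (T : F →L[ℝ] F) (x : F) :
    ⟪x, T x⟫ ≤ ‖T‖ * ‖x‖ ^ 2 :=
  calc ⟪x, T x⟫ ≤ ‖x‖ * ‖T x‖ := real_inner_le_norm _ _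
    _ ≤ ‖x‖ * (‖T‖ * ‖x‖) := by gcongr; exact T.le_opNorm x
    _ = ‖T‖ * ‖x‖ ^ 2 := by ring

lemma Matrix.sum_sum_mul_le_norm_toEuclideanCLM_mul {ι : Type*} [Fintype ι] [DecidableEq ι]
    (E : Matrix ι ι ℝ) (x : ι → ℝ) :
    ∑ i, ∑ j, E i j * x i * x j ≤ ‖Matrix.toEuclideanCLM (𝕜 := ℝ) E‖ * ∑ i, x i ^ 2 := by
  have hquad : ∑ i, ∑ j, E i j * x i * x j =
      ⟪WithLp.toLp 2 x, Matrix.toEuclideanCLM (𝕜 := ℝ) E (WithLp.toLp 2 x)⟫ := by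
    simp only [Matrix.inner_toEuclideanCLM, dotProduct, Matrix.mulVec, Finset.mul_sum]
    exact Finset.sum_congr rfl fun i _ => Finset.sum_congr rfl fun j _ => by ring
  have hnorm : ‖WithLp.toLp 2 x‖ ^ 2 = ∑ i, x i ^ 2 := by
    simp [EuclideanSpace.norm_sq_eq]
  rw [hquad, ← hnorm]
  exact ContinuousLinearMap.real_inner_self_apply_le_opNorm_mul_sq _ _

section

variable {V : Type*} [NormedAddCommGroup V] [InnerProductSpace ℝ V]

lemma norm_sum_sq_le_norm_toEuclideanCLM_mul {ι : Type*} [Fintype ι] [DecidableEq ι]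
    (u : ι → V) (E : Matrix ι ι ℝ) (h : ∀ i j, ⟪u i, u j⟫ ≤ E i j * ‖u i‖ * ‖u j‖) :
    ‖∑ i, u i‖ ^ 2 ≤ ‖Matrix.toEuclideanCLM (𝕜 := ℝ) E‖ * ∑ i, ‖u i‖ ^ 2 :=
  calc ‖∑ i, u i‖ ^ 2 = ∑ i, ∑ j, ⟪u i, u j⟫ := by
        rw [← real_inner_self_eq_norm_sq, sum_inner]; simp only [inner_sum]
    _ ≤ ∑ i, ∑ j, E i j * ‖u i‖ * ‖u j‖ := by gcongr with i _ j _; exact h i j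
    _ ≤ _ := Matrix.sum_sum_mul_le_norm_toEuclideanCLM_mul E _

lemma norm_sq_le_sq_mul_norm_sq_of_norm_sq_le_mul_inner {c : ℝ} (hc : 0 ≤ c) {v w : V}
    (h : ‖w‖ ^ 2 ≤ c * ⟪v, w⟫) : ‖w‖ ^ 2 ≤ c ^ 2 * ‖v‖ ^ 2 := by
  have hw : ‖w‖ ^ 2 ≤ c * ‖v‖ * ‖w‖ :=
    h.trans (by rw [mul_assoc]; exact mul_le_mul_of_nonneg_left (real_inner_le_norm v w) hc)
  have hwv : ‖w‖ ≤ c * ‖v‖ := by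
    rcases (norm_nonneg w).eq_or_lt with h0 | hpos
    · rw [← h0]; positivity
    · nlinarith
  rw [← mul_pow]
  exact pow_le_pow_left₀ (norm_nonneg w) hwv 2

lemma norm_sq_eq_inner_of_inner_eq {K : Submodule ℝ V} {p : V →ₗ[ℝ] V}
    (hmem : ∀ v, p v ∈ K) (hproj : ∀ v, ∀ w ∈ K, ⟪p v, w⟫ = ⟪v, w⟫) (v : V) :
    ‖p v‖ ^ 2 = ⟪v, p v⟫ := by
  rw [← real_inner_self_eq_norm_sq, hproj v _ (hmem v)]

end

theorem asm_boundedness_general {V : Type*} [NormedAddCommGroup V] [InnerProductSpace ℝ V]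
    {N : ℕ} (Vs : Fin N → Submodule ℝ V)
    (P : Fin N → V →ₗ[ℝ] V)
    (hPmem : ∀ i (v : V), P i v ∈ Vs i)
    (hPproj : ∀ i (v : V), ∀ w ∈ Vs i, ⟪P i v, w⟫ = ⟪v, w⟫)
    (E : Matrix (Fin N) (Fin N) ℝ)
    (hCS : ∀ i j, ∀ vi ∈ Vs i, ∀ vj ∈ Vs j,
      ⟪vi, vj⟫ ≤ E i j * Real.sqrt ⟪vi, vi⟫ * Real.sqrt ⟪vj, vj⟫) :
    ∀ v : V, ⟪∑ i, P i v, ∑ i, P i v⟫ ≤ (spectralNorm2 E) ^ 2 * ⟪v, v⟫ := by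
  intro v
  have hCS' : ∀ i j, ⟪P i v, P j v⟫ ≤ E i j * ‖P i v‖ * ‖P j v‖ := fun i j => by
    simpa only [← norm_eq_sqrt_real_inner] using hCS i j _ (hPmem i v) _ (hPmem j v)
  have hsum : ∑ i, ‖P i v‖ ^ 2 = ⟪v, ∑ i, P i v⟫ := by
    simp only [norm_sq_eq_inner_of_inner_eq (hPmem _) (hPproj _), inner_sum]
  have hbound := norm_sum_sq_le_norm_toEuclideanCLM_mul (fun i => P i v) E hCS'
  rw [hsum] at hbound
  rw [real_inner_self_eq_norm_sq, real_inner_self_eq_norm_sq]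
  exact norm_sq_le_sq_mul_norm_sq_of_norm_sq_le_mul_inner (norm_nonneg _) hbound

/-- Boundedness of the additive Schwarz operator under the strengthened
Cauchy–Schwarz assumption: `a(Pv,Pv) ≤ ‖ℰ‖₂² a(v,v)` with `P = Σᵢ Pᵢ`. -/
theorem asm_boundedness {V : Type*} [NormedAddCommGroup V] [InnerProductSpace ℝ V]
    {N : ℕ} (Vs : Fin N → Submodule ℝ V) (hclosed : ∀ i, IsClosed (Vs i : Set V))
    (P : Fin N → V →ₗ[ℝ] V)
    (hPmem : ∀ i (v : V), P i v ∈ Vs i)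
    (hPproj : ∀ i (v : V), ∀ w ∈ Vs i, ⟪P i v, w⟫ = ⟪v, w⟫)
    (E : Matrix (Fin N) (Fin N) ℝ)
    (hE0 : ∀ i j, 0 ≤ E i j) (hE1 : ∀ i j, E i j ≤ 1)
    (hCS : ∀ i j, ∀ vi ∈ Vs i, ∀ vj ∈ Vs j,
      ⟪vi, vj⟫ ≤ E i j * Real.sqrt ⟪vi, vi⟫ * Real.sqrt ⟪vj, vj⟫) :
    ∀ v : V, ⟪∑ i, P i v, ∑ i, P i v⟫ ≤ (spectralNorm2 E) ^ 2 * ⟪v, v⟫ :=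
  asm_boundedness_general Vs P hPmem hPproj E hCS
end
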